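/- arXiv:math/9805001 — 6 statements merged into one kernel-verified Lean document; each statement's English description precedes it below -/
import Mathlib

section
/- Let h be a real number with h ≠ −k/2 for every integer k ≥ 0. Then the differentiation operator D satisfies the commutation relations [D, l₋₁] = id, [D, l₀] = D, and [D, l₁] = D² on ℂ[z]; moreover D is the unique ℂ-linear endomorphism of ℂ[z] satisfying these three relations. -/
open Polynomial

noncomputable section

/-- Operators (ℂ-linear endomorphisms) on ℂ[z], realized as `Polynomial ℂ`. -/
abbrev E : Type := Module.End ℂ (Polynomial ℂ)

/-- The differentiation operator `D(p) = p'`. -/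
def Dop : E := Polynomial.derivative

/-- Multiplication by `z`. -/
def Mz : E := LinearMap.mulLeft ℂ (X : Polynomial ℂ)

/-- `l₋₁(p) = z·p`. -/
def lm1 : E := Mz

/-- `l₀(p) = z·p' + h·p`. -/
def l0 (h : ℝ) : E := Mz * Dop + (h : ℂ) • (1 : E)

/-- `l₁(p) = z·p'' + 2h·p'`. -/
def l1 (h : ℝ) : E := Mz * Dop ^ 2 + ((2 * h : ℝ) : ℂ) • Dop

/-- Commutator `[A,B] = A∘B − B∘A`. -/
def opComm (A B : E) : E := A * B - B * A

/-- The weight `w h n = n!·(2h)(2h+1)⋯(2h+n−1)`, i.e. the squared norm `⟨zⁿ, zⁿ⟩`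
in the unitarizable Verma module. -/
def w (h : ℝ) (n : ℕ) : ℝ := (n.factorial : ℝ) * ∏ i ∈ Finset.range n, (2 * h + (i : ℝ))



/-!
The three relations are instances of the Leibniz rule. For uniqueness, `[D', l₋₁] = id` says
`D'(z·p) = z·D'(p) + p`, so `D'` is determined on monomials by `q = D'(1)`; and evaluating
`[D', l₀] = D'` at `1` gives `z·q' = −q`, which forces `q = 0` because the coefficient of `zⁿ`
in `z·q' + q` is `(n + 1)·qₙ`.
-/

namespace Polynomial

variable {R : Type*} [CommRing R]

theorem eq_zero_of_X_mul_derivative_eq_neg [NoZeroDivisors R] [CharZero R] {p : R[X]}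
    (hp : X * derivative p = -p) : p = 0 := by
  ext n
  have hn := congrArg (coeff · n) hp
  cases n with
  | zero => simpa using hn.symm
  | succ m =>
    simp only [coeff_X_mul, coeff_derivative, coeff_neg] at hn
    have hsum : ((m + 2 : ℕ) : R) * p.coeff (m + 1) = 0 := by
      push_cast
      linear_combination hn
    exact (mul_eq_zero.mp hsum).resolve_left (Nat.cast_ne_zero.mpr (by omega))

theorem eq_derivative_of_map_X_mul {D : Module.End R R[X]}
    (hX : ∀ p, D (X * p) = X * D p + p) (h1 : D 1 = 0) : D = derivative := by
  have hpow : ∀ n : ℕ, D (X ^ n) = derivative (X ^ n) := by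
    intro n
    induction n with
    | zero => simpa using h1
    | succ m ih =>
      rw [pow_succ', hX, ih, derivative_mul, derivative_X]
      ring
  refine lhom_ext' fun n => LinearMap.ext_ring ?_
  simpa only [LinearMap.comp_apply, monomial_one_right_eq_X_pow] using hpow n

end Polynomial

theorem opComm_Dop_lm1 : opComm Dop lm1 = 1 := by
  refine LinearMap.ext fun p => ?_
  simp [opComm, Dop, lm1, Mz, derivative_mul]

theorem opComm_Dop_l0 (h : ℝ) : opComm Dop (l0 h) = Dop := by
  refine LinearMap.ext fun p => ?_
  simp [opComm, Dop, Mz, l0, derivative_mul, smul_eq_C_mul]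

theorem opComm_Dop_l1 (h : ℝ) : opComm Dop (l1 h) = Dop ^ 2 := by
  refine LinearMap.ext fun p => ?_
  simp [opComm, Dop, Mz, l1, derivative_mul, smul_eq_C_mul, pow_two]

theorem map_X_mul_of_opComm_lm1 {D : E} (hD : opComm D lm1 = 1) (p : ℂ[X]) :
    D (X * p) = X * D p + p := by
  have hp := LinearMap.congr_fun hD p
  simp only [opComm, lm1, Mz, LinearMap.sub_apply, Module.End.mul_apply,
    LinearMap.mulLeft_apply, Module.End.one_apply] at hp
  linear_combination hp

theorem map_one_eq_zero_of_opComm_l0 {D : E} {h : ℝ} (hD : opComm D (l0 h) = D) : D 1 = 0 := by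
  have h1 := LinearMap.congr_fun hD 1
  simp only [opComm, l0, Mz, Dop, LinearMap.sub_apply, Module.End.mul_apply, LinearMap.add_apply,
    derivative_one, LinearMap.mulLeft_apply, mul_zero, LinearMap.smul_apply, Module.End.one_apply,
    Complex.coe_smul, zero_add, LinearMap.map_smul_of_tower, sub_add_cancel_right] at h1
  apply eq_zero_of_X_mul_derivative_eq_neg
  linear_combination -h1

theorem stmt_0_general (h : ℝ) :
    (opComm Dop lm1 = 1 ∧ opComm Dop (l0 h) = Dop ∧ opComm Dop (l1 h) = Dop ^ 2) ∧
    (∀ D' : E,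
      (opComm D' lm1 = 1 ∧ opComm D' (l0 h) = D' ∧ opComm D' (l1 h) = D' ^ 2) →
        D' = Dop) :=
  ⟨⟨opComm_Dop_lm1, opComm_Dop_l0 h, opComm_Dop_l1 h⟩, fun _ ⟨hlm1, hl0, _⟩ =>
    eq_derivative_of_map_X_mul (map_X_mul_of_opComm_lm1 hlm1) (map_one_eq_zero_of_opComm_l0 hl0)⟩

/-- For nondegenerate extremal weight `h` (i.e. `h ≠ −k/2` for all `k ∈ ℕ`),
the differentiation operator `D` satisfies `[D,l₋₁] = id`, `[D,l₀] = D`, `[D,l₁] = D²`,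
and it is the unique ℂ-linear endomorphism of `ℂ[z]` satisfying these relations. -/
theorem stmt_0 (h : ℝ) (hh : ∀ k : ℕ, h ≠ -(k : ℝ) / 2) :
    (opComm Dop lm1 = 1 ∧ opComm Dop (l0 h) = Dop ∧ opComm Dop (l1 h) = Dop ^ 2) ∧
    (∀ D' : E,
      (opComm D' lm1 = 1 ∧ opComm D' (l0 h) = D' ∧ opComm D' (l1 h) = D' ^ 2) →
        D' = Dop) :=
  stmt_0_general h

end
end

section
/- Let h be a real number with h ≠ −k/2 for every integer k ≥ 0. Then the operator F satisfies the commutation relations [l₁, F] = id, [l₀, F] = F, and [l₋₁, F] = F² on ℂ[z]; moreover F is the unique ℂ-linear endomorphism of ℂ[z] satisfying these three relations. -/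
open Polynomial

noncomputable section

/-!
On the monomial basis `l₀` is diagonal, `l₀ zⁿ = (n + h) zⁿ`, and `l₁` lowers degree,
`l₁ zⁿ⁺¹ = (n + 1)(n + 2h) zⁿ`, so the three relations for `F` reduce to identities between
rational functions of `n`. For uniqueness, the difference `K = G - F` of two solutions satisfies
`[l₁, K] = 0` and `[l₀, K] = K`. The second relation makes `K` raise the `l₀`-weight by one, so
`K zⁿ ∈ ℂ zⁿ⁺¹`, and these lines are weight spaces because the weights `n + h` are distinct.
Commuting `K` with `l₁` then gives `K zⁿ = 0` by induction on `n`, as `(n + 1)(n + 2h) ≠ 0`.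
-/

lemma E_ext_X_pow {A B : E} (hAB : ∀ n : ℕ, A (X ^ n) = B (X ^ n)) : A = B :=
  (basisMonomials ℂ).ext fun n => by simpa [coe_basisMonomials, X_pow_eq_monomial] using hAB n

lemma opComm_apply (A B : E) (p : ℂ[X]) : opComm A B p = A (B p) - B (A p) := rfl

lemma opComm_sub_right (A B C : E) : opComm A (B - C) = opComm A B - opComm A C := by
  simp only [opComm, mul_sub, sub_mul]
  abel

lemma lm1_apply (p : ℂ[X]) : lm1 p = X * p := rfl

lemma l0_apply (h : ℝ) (p : ℂ[X]) : l0 h p = X * derivative p + (h : ℂ) • p := rfl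

lemma l1_apply (h : ℝ) (p : ℂ[X]) :
    l1 h p = X * derivative (derivative p) + ((2 * h : ℝ) : ℂ) • derivative p := by
  simp [l1, Mz, Dop, pow_two]

lemma l0_X_pow (h : ℝ) (n : ℕ) : l0 h (X ^ n) = ((n : ℂ) + h) • X ^ n := by
  rcases n with _ | n
  · simp [l0_apply]
  · simp only [l0_apply, derivative_X_pow, smul_eq_C_mul, Nat.add_sub_cancel, map_add,
      map_natCast]
    ring

lemma l1_one (h : ℝ) : l1 h 1 = 0 := by
  simp [l1_apply]

lemma l1_X_pow_succ (h : ℝ) (n : ℕ) :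
    l1 h (X ^ (n + 1)) = (((n : ℂ) + 1) * ((n : ℂ) + 2 * h)) • X ^ n := by
  rcases n with _ | n
  · simp [l1_apply]
  · simp only [l1_apply, derivative_X_pow, derivative_C_mul_X_pow, smul_eq_C_mul,
      Nat.add_sub_cancel]
    push_cast
    simp only [map_add, map_mul, map_natCast, map_ofNat, map_one]
    ring

lemma coeff_l0 (h : ℝ) (p : ℂ[X]) (m : ℕ) : (l0 h p).coeff m = ((m : ℂ) + h) * p.coeff m := by
  rw [l0_apply]
  rcases m with _ | m
  · simp [mul_coeff_zero]
  · simp only [coeff_add, coeff_X_mul, coeff_derivative, coeff_smul, smul_eq_mul]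
    push_cast
    ring

lemma eq_smul_X_pow_of_l0_eq_smul {h : ℝ} {m : ℕ} {p : ℂ[X]}
    (hp : l0 h p = ((m : ℂ) + h) • p) : p = p.coeff m • X ^ m := by
  ext k
  rcases eq_or_ne k m with rfl | hk
  · simp
  · have hcoeff := congrArg (coeff · k) hp
    simp only [coeff_l0, coeff_smul, smul_eq_mul] at hcoeff
    have hk' : (k : ℂ) + h ≠ (m : ℂ) + h := by simpa using hk
    simp [hk, (mul_eq_mul_right_iff.mp hcoeff).resolve_left hk']

lemma exists_apply_X_pow_eq_smul_of_opComm_l0 {h : ℝ} {K : E} (hK : opComm (l0 h) K = K)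
    (n : ℕ) : ∃ a : ℂ, K (X ^ n) = a • X ^ (n + 1) := by
  refine ⟨_, eq_smul_X_pow_of_l0_eq_smul (h := h) ?_⟩
  have hn := congrArg (· (X ^ n)) hK
  simp only [opComm_apply, l0_X_pow, map_smul] at hn
  rw [sub_eq_iff_eq_add] at hn
  rw [hn, Nat.cast_succ]
  module

lemma eq_zero_of_opComm_l1_of_opComm_l0 {h : ℝ} (hden : ∀ n : ℕ, (n : ℂ) + 2 * h ≠ 0) {K : E}
    (hK1 : opComm (l1 h) K = 0) (hK0 : opComm (l0 h) K = K) : K = 0 := by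
  have commute_l1 (p : ℂ[X]) : l1 h (K p) = K (l1 h p) := by
    simpa [opComm_apply, sub_eq_zero] using congrArg (· p) hK1
  have of_l1 (n : ℕ) (hn : K (l1 h (X ^ n)) = 0) : K (X ^ n) = 0 := by
    obtain ⟨a, ha⟩ := exists_apply_X_pow_eq_smul_of_opComm_l0 hK0 n
    rw [← commute_l1, ha, map_smul, l1_X_pow_succ, smul_smul, smul_eq_zero] at hn
    have hcoeff : (n : ℂ) + 1 ≠ 0 := by exact_mod_cast n.succ_ne_zero
    have ha0 : a = 0 := by
      simpa [hcoeff, hden n] using hn.resolve_right (pow_ne_zero _ X_ne_zero)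
    rw [ha, ha0, zero_smul]
  refine E_ext_X_pow fun n => ?_
  rw [LinearMap.zero_apply]
  induction n with
  | zero => exact of_l1 0 (by rw [pow_zero, l1_one, map_zero])
  | succ n ih => exact of_l1 _ (by rw [l1_X_pow_succ, map_smul, ih, smul_zero])

section ExplicitF

variable {h : ℝ} {F : E}

lemma l1_F_X_pow (hden : ∀ n : ℕ, (n : ℂ) + 2 * h ≠ 0)
    (hF : ∀ n : ℕ, F (X ^ n) = (((n : ℂ) + 2 * h)⁻¹) • X ^ (n + 1)) (n : ℕ) :
    l1 h (F (X ^ n)) = ((n : ℂ) + 1) • X ^ n := by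
  rw [hF, map_smul, l1_X_pow_succ, smul_smul, mul_left_comm, inv_mul_cancel₀ (hden n), mul_one]

lemma F_l1_X_pow (hden : ∀ n : ℕ, (n : ℂ) + 2 * h ≠ 0)
    (hF : ∀ n : ℕ, F (X ^ n) = (((n : ℂ) + 2 * h)⁻¹) • X ^ (n + 1)) (n : ℕ) :
    F (l1 h (X ^ n)) = (n : ℂ) • X ^ n := by
  rcases n with _ | n
  · rw [pow_zero, l1_one, map_zero, Nat.cast_zero, zero_smul]
  · rw [l1_X_pow_succ, map_smul, hF, smul_smul, mul_assoc, mul_inv_cancel₀ (hden n), mul_one,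
      Nat.cast_succ]

lemma opComm_l1_F (hden : ∀ n : ℕ, (n : ℂ) + 2 * h ≠ 0)
    (hF : ∀ n : ℕ, F (X ^ n) = (((n : ℂ) + 2 * h)⁻¹) • X ^ (n + 1)) :
    opComm (l1 h) F = 1 :=
  E_ext_X_pow fun n => by
    rw [opComm_apply, Module.End.one_apply, l1_F_X_pow hden hF, F_l1_X_pow hden hF, ← sub_smul]
    simp

lemma opComm_l0_F (hF : ∀ n : ℕ, F (X ^ n) = (((n : ℂ) + 2 * h)⁻¹) • X ^ (n + 1)) :
    opComm (l0 h) F = F :=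
  E_ext_X_pow fun n => by
    simp only [opComm_apply, hF, map_smul, l0_X_pow, smul_smul, ← sub_smul]
    congr 1
    push_cast
    ring

lemma opComm_lm1_F (hden : ∀ n : ℕ, (n : ℂ) + 2 * h ≠ 0)
    (hF : ∀ n : ℕ, F (X ^ n) = (((n : ℂ) + 2 * h)⁻¹) • X ^ (n + 1)) :
    opComm lm1 F = F ^ 2 :=
  E_ext_X_pow fun n => by
    have hden_succ : (n : ℂ) + 1 + 2 * h ≠ 0 := by simpa using hden (n + 1)
    simp only [opComm_apply, sq, Module.End.mul_apply, map_smul, lm1_apply, ← pow_succ', hF,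
      smul_smul, ← sub_smul]
    congr 1
    push_cast
    field_simp [hden n]
    ring

end ExplicitF

lemma natCast_add_two_mul_ne_zero {h : ℝ} (hh : ∀ k : ℕ, h ≠ -(k : ℝ) / 2) (n : ℕ) :
    (n : ℂ) + 2 * h ≠ 0 := by
  intro hc
  apply hh n
  have : (n : ℝ) + 2 * h = 0 := by exact_mod_cast hc
  linarith

/-- For nondegenerate extremal weight `h`, the operator `F`
(the unique endomorphism with `F(zⁿ) = zⁿ⁺¹/(n+2h)`) satisfies `[l₁,F] = id`,
`[l₀,F] = F`, `[l₋₁,F] = F²`, and is the unique endomorphism satisfying these relations. -/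
theorem stmt_1 (h : ℝ) (hh : ∀ k : ℕ, h ≠ -(k : ℝ) / 2)
    (F : E) (hF : ∀ n : ℕ, F (X ^ n) = (((n : ℂ) + 2 * h)⁻¹) • X ^ (n + 1)) :
    (opComm (l1 h) F = 1 ∧ opComm (l0 h) F = F ∧ opComm lm1 F = F ^ 2) ∧
    (∀ G : E,
      (opComm (l1 h) G = 1 ∧ opComm (l0 h) G = G ∧ opComm lm1 G = G ^ 2) →
        G = F) := by
  have hden := natCast_add_two_mul_ne_zero hh
  have hF1 := opComm_l1_F hden hF
  have hF0 := opComm_l0_F hF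
  refine ⟨⟨hF1, hF0, opComm_lm1_F hden hF⟩, fun G ⟨hG1, hG0, _⟩ => ?_⟩
  rw [← sub_eq_zero]
  apply eq_zero_of_opComm_l1_of_opComm_l0 hden
  · rw [opComm_sub_right, hG1, hF1, sub_self]
  · rw [opComm_sub_right, hG0, hF0]

end
end

section
/- Let h be a real number with h ≠ −k/2 for every integer k ≥ 0. Then the operators D and F on ℂ[z] satisfy the Lobachevskii–Berezin relations [F∘D, D∘F] = 0 and (2h−1)·[D, F] = (id − D∘F)∘(id − F∘D); in particular, if h ≠ 1/2 then [D, F] = q_R·(id − D∘F)∘(id − F∘D) with q_R = 1/(2h−1). -/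
/-! Both `D ∘ F` and `F ∘ D` are diagonal in the monomial basis, with eigenvalues
`μₙ = (n + 1) / (n + 2h)` and `νₙ = n / (n - 1 + 2h)` on `zⁿ`. Diagonal operators commute,
and the second relation reduces to the scalar identity `(2h - 1) (μₙ - νₙ) = (1 - μₙ) (1 - νₙ)`,
which holds because `(n + 1)(n - 1 + 2h) - n (n + 2h) = 2h - 1`. -/

open Polynomial

noncomputable section

namespace Polynomial

def IsMonomialDiagonal {R : Type*} [CommSemiring R] (A : Module.End R R[X]) (μ : ℕ → R) :
    Prop :=
  ∀ n, A (X ^ n) = μ n • X ^ n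

namespace IsMonomialDiagonal

section CommSemiring

variable {R : Type*} [CommSemiring R] {A B : Module.End R R[X]} {μ ν : ℕ → R}

theorem one : IsMonomialDiagonal (1 : Module.End R R[X]) 1 := fun n => by simp

theorem mul (hA : IsMonomialDiagonal A μ) (hB : IsMonomialDiagonal B ν) :
    IsMonomialDiagonal (A * B) (μ * ν) := fun n => by
  rw [Module.End.mul_apply, hB n, map_smul, hA n, smul_smul, Pi.mul_apply, mul_comm]

theorem smul (hA : IsMonomialDiagonal A μ) (c : R) : IsMonomialDiagonal (c • A) (c • μ) :=
  fun n => by rw [LinearMap.smul_apply, hA n, smul_smul, Pi.smul_apply, smul_eq_mul]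

theorem eq_of_eigenvalues_eq (hA : IsMonomialDiagonal A μ) (hB : IsMonomialDiagonal B ν)
    (hμν : μ = ν) : A = B :=
  lhom_ext' fun n => LinearMap.ext_ring <| by
    simp only [LinearMap.comp_apply, ← C_mul_X_pow_eq_monomial, map_one, one_mul,
      hA n, hB n, hμν]

theorem commute (hA : IsMonomialDiagonal A μ) (hB : IsMonomialDiagonal B ν) : Commute A B :=
  (hA.mul hB).eq_of_eigenvalues_eq (hB.mul hA) (mul_comm μ ν)

end CommSemiring

theorem sub {R : Type*} [CommRing R] {A B : Module.End R R[X]} {μ ν : ℕ → R}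
    (hA : IsMonomialDiagonal A μ) (hB : IsMonomialDiagonal B ν) :
    IsMonomialDiagonal (A - B) (μ - ν) :=
  fun n => by rw [LinearMap.sub_apply, hA n, hB n, Pi.sub_apply, sub_smul]

end IsMonomialDiagonal

section LobachevskiiBerezin

variable {K : Type*} [Field K] {s : K} {F : Module.End K K[X]}

theorem isMonomialDiagonal_derivative_mul
    (hF : ∀ n : ℕ, F (X ^ n) = ((n : K) + s)⁻¹ • X ^ (n + 1)) :
    IsMonomialDiagonal (derivative * F) fun n => ((n : K) + 1) / (n + s) := fun n => by
  rw [Module.End.mul_apply, hF n, map_smul, derivative_X_pow, ← smul_eq_C_mul, smul_smul]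
  push_cast
  rw [div_eq_inv_mul]

/-- At `n = 0` the formula reads `0 / (s - 1) = 0`, also when `s = 1`. -/
theorem isMonomialDiagonal_mul_derivative
    (hF : ∀ n : ℕ, F (X ^ n) = ((n : K) + s)⁻¹ • X ^ (n + 1)) :
    IsMonomialDiagonal (F * derivative) fun n => (n : K) / (n - 1 + s) := by
  rintro (_ | m)
  · simp
  · rw [Module.End.mul_apply, derivative_X_pow, ← smul_eq_C_mul, map_smul,
      add_tsub_cancel_right, hF m, smul_smul]
    push_cast
    rw [add_sub_cancel_right, div_eq_mul_inv]

theorem lobachevskiiBerezin_eigenvalues (hs : ∀ k : ℕ, (k : K) + s ≠ 0) (n : ℕ) :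
    (s - 1) * (((n : K) + 1) / (n + s) - n / (n - 1 + s)) =
      (1 - ((n : K) + 1) / (n + s)) * (1 - n / (n - 1 + s)) := by
  have hn := hs n
  rcases n with _ | m
  · simp only [Nat.cast_zero, zero_add] at hn ⊢
    field_simp
    ring
  · have hm := hs m
    push_cast at hn ⊢
    rw [add_sub_cancel_right]
    field_simp
    ring

theorem commute_mul_derivative_derivative_mul
    (hF : ∀ n : ℕ, F (X ^ n) = ((n : K) + s)⁻¹ • X ^ (n + 1)) :
    Commute (F * derivative) (derivative * F) :=
  (isMonomialDiagonal_mul_derivative hF).commute (isMonomialDiagonal_derivative_mul hF)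

theorem lobachevskiiBerezin_relation (hs : ∀ k : ℕ, (k : K) + s ≠ 0)
    (hF : ∀ n : ℕ, F (X ^ n) = ((n : K) + s)⁻¹ • X ^ (n + 1)) :
    (s - 1) • (derivative * F - F * derivative) = (1 - derivative * F) * (1 - F * derivative) :=
  have hDF := isMonomialDiagonal_derivative_mul hF
  have hFD := isMonomialDiagonal_mul_derivative hF
  ((hDF.sub hFD).smul (s - 1)).eq_of_eigenvalues_eq ((IsMonomialDiagonal.one.sub hDF).mul
    (IsMonomialDiagonal.one.sub hFD)) (by ext n; exact lobachevskiiBerezin_eigenvalues hs n)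

end LobachevskiiBerezin

end Polynomial

/-- For nondegenerate extremal weight `h`, the operators `D` and `F`
satisfy the Lobachevskii–Berezin relations `[F∘D, D∘F] = 0` and
`(2h−1)·[D,F] = (id − D∘F)∘(id − F∘D)`; in particular for `h ≠ 1/2`,
`[D,F] = q_R·(id − D∘F)∘(id − F∘D)` with `q_R = 1/(2h−1)`. -/
theorem stmt_2 (h : ℝ) (hh : ∀ k : ℕ, h ≠ -(k : ℝ) / 2)
    (F : E) (hF : ∀ n : ℕ, F (X ^ n) = (((n : ℂ) + 2 * h)⁻¹) • X ^ (n + 1)) :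
    opComm (F * Dop) (Dop * F) = 0 ∧
    ((2 * h - 1 : ℝ) : ℂ) • opComm Dop F = (1 - Dop * F) * (1 - F * Dop) ∧
    (h ≠ 1 / 2 →
      opComm Dop F = (((2 * h - 1 : ℝ)⁻¹ : ℝ) : ℂ) • ((1 - Dop * F) * (1 - F * Dop))) := by
  have hs : ∀ k : ℕ, (k : ℂ) + 2 * h ≠ 0 := fun k hk => hh k <| by
    have : (k : ℝ) + 2 * h = 0 := by exact_mod_cast hk
    linarith
  have relation : ((2 * h - 1 : ℝ) : ℂ) • opComm Dop F = (1 - Dop * F) * (1 - F * Dop) := by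
    push_cast
    exact lobachevskiiBerezin_relation hs hF
  refine ⟨sub_eq_zero.mpr (commute_mul_derivative_derivative_mul hF), relation, fun hhalf => ?_⟩
  have hq : ((2 * h - 1 : ℝ) : ℂ) ≠ 0 := by
    exact_mod_cast sub_ne_zero.mpr (by contrapose! hhalf; linarith)
  rw [← relation, smul_smul, Complex.ofReal_inv, inv_mul_cancel₀ hq, one_smul]

end
end

section
/- Let h > 0. Then on the unitarizable Verma module the operators D and F are mutually adjoint and bounded: ⟨D p, q⟩ = ⟨p, F q⟩ for all p, q ∈ ℂ[z], and there is a constant C > 0 (one may take C = max(1, (2h)^{−1/2})) such that ‖D p‖ ≤ C·‖p‖ and ‖F p‖ ≤ C·‖p‖ for all p ∈ ℂ[z]. -/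
/-! In the monomial basis the form is diagonal with weights `w h n`, while `D` and `F` are
weighted shifts `zⁿ ↦ n zⁿ⁻¹` and `zⁿ ↦ zⁿ⁺¹ / (n + 2h)`. The recursion
`w h (n + 1) = (n + 1)(n + 2h) · w h n` makes them adjoint, and it turns the squared norms of
`D p` and `F p` into sums of the terms `|pₙ|² w h n` rescaled by `(n + 1) / (n + 2h)`, a ratio
bounded by `max 1 (2h)⁻¹`. -/

open Polynomial

noncomputable section

open Finset

theorem Polynomial.sesq_apply_eq_sum_range {R : Type*} [CommSemiring R] {σ : R →+* R}
    (B : R[X] →ₗ[R] R[X] →ₛₗ[σ] R) (c : ℕ → R)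
    (horth : ∀ m n, m ≠ n → B (X ^ m) (X ^ n) = 0) (hdiag : ∀ n, B (X ^ n) (X ^ n) = c n)
    {p : R[X]} {N : ℕ} (hp : p.natDegree < N) (q : R[X]) :
    B p q = ∑ n ∈ range N, p.coeff n * σ (q.coeff n) * c n := by
  have hmono : ∀ m n, B (X ^ m) (X ^ n) = if m = n then c n else 0 := fun m n => by
    split_ifs with hmn
    · rw [hmn, hdiag]
    · exact horth m n hmn
  conv_lhs => rw [p.as_sum_range' N hp, q.as_sum_support]
  simp only [← smul_X_eq_monomial, map_sum, LinearMap.coe_sum, Finset.sum_apply, map_smul,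
    map_smulₛₗ, LinearMap.smul_apply, hmono, smul_eq_mul, mul_ite, mul_zero, sum_ite_eq']
  rw [sum_ite_mem]
  refine (sum_subset inter_subset_right fun n hn hnq => ?_).trans
    (sum_congr rfl fun n _ => by ring)
  rw [notMem_support_iff.mp fun hq => hnq (mem_inter.mpr ⟨hq, hn⟩)]
  simp

theorem Polynomial.sesq_apply_self_re_eq_sum (B : ℂ[X] →ₗ[ℂ] ℂ[X] →ₗ⋆[ℂ] ℂ) (w : ℕ → ℝ)
    (horth : ∀ m n, m ≠ n → B (X ^ m) (X ^ n) = 0) (hdiag : ∀ n, B (X ^ n) (X ^ n) = w n)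
    {p : ℂ[X]} {N : ℕ} (hp : p.natDegree < N) :
    (B p p).re = ∑ n ∈ range N, Complex.normSq (p.coeff n) * w n := by
  rw [sesq_apply_eq_sum_range B (fun n => (w n : ℂ)) horth hdiag hp, Complex.re_sum]
  refine sum_congr rfl fun n _ => ?_
  rw [Complex.mul_conj, ← Complex.ofReal_mul, Complex.ofReal_re]

theorem add_one_le_max_one_inv_mul {a x : ℝ} (ha : 0 < a) (hx : 0 ≤ x) :
    x + 1 ≤ max 1 a⁻¹ * (a + x) := by
  rcases le_total 1 a with h1 | h1
  · nlinarith [le_max_left 1 a⁻¹]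
  · calc x + 1 ≤ a⁻¹ * (a + x) := by
          rw [mul_add, inv_mul_cancel₀ ha.ne', add_comm]
          nlinarith [one_le_inv₀ ha |>.mpr h1]
      _ ≤ max 1 a⁻¹ * (a + x) :=
          mul_le_mul_of_nonneg_right (le_max_right _ _) (by linarith)

theorem Real.sqrt_le_max_one_inv_sqrt_mul {a x y : ℝ} (h : x ≤ max 1 a⁻¹ * y) :
    √x ≤ max 1 (√a)⁻¹ * √y :=
  calc √x ≤ √(max 1 a⁻¹ * y) := Real.sqrt_le_sqrt h
    _ = max 1 (√a)⁻¹ * √y := by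
      rw [Real.sqrt_mul (zero_le_one.trans (le_max_left _ _)), Real.sqrt_monotone.map_max,
        Real.sqrt_one, Real.sqrt_inv]

theorem w_succ (h : ℝ) (n : ℕ) : w h (n + 1) = (n + 1) * (2 * h + n) * w h n := by
  simp only [w, prod_range_succ, Nat.factorial_succ]
  push_cast
  ring

theorem w_pos {h : ℝ} (hh : 0 < h) (n : ℕ) : 0 < w h n :=
  mul_pos (by positivity) (prod_pos fun i _ => by positivity)

section ShiftOperator

variable {h : ℝ} {F : E} (hF : ∀ n : ℕ, F (X ^ n) = (((n : ℂ) + 2 * h)⁻¹) • X ^ (n + 1))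
include hF

theorem coeff_F_zero (q : ℂ[X]) : (F q).coeff 0 = 0 := by
  induction q using Polynomial.induction_on' with
  | add p q hp hq => rw [map_add, coeff_add, hp, hq, add_zero]
  | monomial n a => rw [← smul_X_eq_monomial, map_smul, hF, coeff_smul, coeff_smul, coeff_X_pow,
      if_neg (Nat.succ_ne_zero n).symm, smul_zero, smul_zero]

theorem coeff_F_succ (q : ℂ[X]) (n : ℕ) :
    (F q).coeff (n + 1) = ((n : ℂ) + 2 * h)⁻¹ * q.coeff n := by
  induction q using Polynomial.induction_on' with
  | add p q hp hq => rw [map_add, coeff_add, hp, hq, coeff_add, mul_add]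
  | monomial m a =>
    rw [← smul_X_eq_monomial, map_smul, hF, coeff_smul, coeff_smul, coeff_smul, coeff_X_pow,
      coeff_X_pow]
    by_cases hmn : n = m
    · subst hmn; simp [mul_comm]
    · simp [hmn]

theorem natDegree_F_le (q : ℂ[X]) : (F q).natDegree ≤ q.natDegree + 1 := by
  refine natDegree_le_iff_coeff_eq_zero.mpr fun k hk => ?_
  obtain ⟨n, rfl⟩ := Nat.exists_eq_succ_of_ne_zero (by omega : k ≠ 0)
  rw [coeff_F_succ hF, coeff_eq_zero_of_natDegree_lt (by omega), mul_zero]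

end ShiftOperator

section VermaForm

variable {h : ℝ} {B : ℂ[X] →ₗ[ℂ] ℂ[X] →ₗ⋆[ℂ] ℂ}
  (horth : ∀ m n, m ≠ n → B (X ^ m) (X ^ n) = 0) (hdiag : ∀ n, B (X ^ n) (X ^ n) = (w h n : ℂ))
include horth hdiag

theorem sesq_apply_derivative_self_re_le (hh : 0 < h) (p : ℂ[X]) :
    (B (derivative p) (derivative p)).re ≤ max 1 (2 * h)⁻¹ * (B p p).re := by
  set N := p.natDegree + 1
  have hDp : (derivative p).natDegree < N := (natDegree_derivative_le p).trans_lt (by omega)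
  rw [sesq_apply_self_re_eq_sum B (w h) horth hdiag hDp,
    sesq_apply_self_re_eq_sum B (w h) horth hdiag (by omega : p.natDegree < N + 1),
    sum_range_succ' _ N, mul_add, mul_sum]
  refine le_add_of_le_of_nonneg (sum_le_sum fun n _ => ?_)
    (mul_nonneg (zero_le_one.trans (le_max_left _ _))
      (mul_nonneg (Complex.normSq_nonneg _) (w_pos hh 0).le))
  have hkey := add_one_le_max_one_inv_mul (by positivity : 0 < 2 * h) n.cast_nonneg
  have hnorm : Complex.normSq ((n : ℂ) + 1) = (n + 1) * (n + 1) := by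
    rw [← Nat.cast_succ, Complex.normSq_natCast]; push_cast; ring
  rw [coeff_derivative, Complex.normSq_mul, hnorm, w_succ]
  nlinarith [mul_le_mul_of_nonneg_left hkey (mul_nonneg (Complex.normSq_nonneg (p.coeff (n + 1)))
    (mul_nonneg (by positivity : (0 : ℝ) ≤ n + 1) (w_pos hh n).le))]

variable {F : E} (hF : ∀ n : ℕ, F (X ^ n) = (((n : ℂ) + 2 * h)⁻¹) • X ^ (n + 1))
include hF

theorem sesq_apply_derivative_eq_apply_F (hnd : ∀ n : ℕ, (n : ℝ) + 2 * h ≠ 0) (p q : ℂ[X]) :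
    B (derivative p) q = B p (F q) := by
  set N := p.natDegree + 1
  have hDp : (derivative p).natDegree < N := (natDegree_derivative_le p).trans_lt (by omega)
  rw [sesq_apply_eq_sum_range B _ horth hdiag hDp,
    sesq_apply_eq_sum_range B _ horth hdiag (by omega : p.natDegree < N + 1),
    sum_range_succ' _ N, coeff_F_zero hF, map_zero, mul_zero, zero_mul, add_zero]
  refine sum_congr rfl fun n _ => ?_
  have hn : (n : ℂ) + 2 * h ≠ 0 := by exact_mod_cast hnd n
  rw [coeff_derivative, coeff_F_succ hF, w_succ]
  simp only [map_mul, map_inv₀, map_add, map_natCast, map_ofNat, Complex.conj_ofReal]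
  push_cast
  field_simp
  ring

theorem sesq_apply_F_self_re_le (hh : 0 < h) (p : ℂ[X]) :
    (B (F p) (F p)).re ≤ max 1 (2 * h)⁻¹ * (B p p).re := by
  set N := p.natDegree + 1
  have hFp : (F p).natDegree < N + 1 := (natDegree_F_le hF p).trans_lt (by omega)
  rw [sesq_apply_self_re_eq_sum B (w h) horth hdiag hFp, sum_range_succ' _ N, coeff_F_zero hF,
    map_zero, zero_mul, add_zero,
    sesq_apply_self_re_eq_sum B (w h) horth hdiag (by omega : p.natDegree < N), mul_sum]
  refine sum_le_sum fun n _ => ?_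
  have hkey := add_one_le_max_one_inv_mul (by positivity : 0 < 2 * h) n.cast_nonneg
  have hratio : ((2 * h + n) * (2 * h + n))⁻¹ * ((n + 1) * (2 * h + n)) ≤ max 1 (2 * h)⁻¹ := by
    rw [inv_mul_le_iff₀ (by positivity)]
    nlinarith
  have hnorm : Complex.normSq ((n : ℂ) + 2 * h)⁻¹ = ((2 * h + n) * (2 * h + n))⁻¹ := by
    rw [Complex.normSq_inv, show (n : ℂ) + 2 * h = ((2 * h + n : ℝ) : ℂ) by push_cast; ring,
      Complex.normSq_ofReal]
  rw [coeff_F_succ hF, Complex.normSq_mul, hnorm, w_succ]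
  nlinarith [mul_le_mul_of_nonneg_right hratio
    (mul_nonneg (Complex.normSq_nonneg (p.coeff n)) (w_pos hh n).le)]

end VermaForm

/-- For `h > 0`, on the unitarizable Verma module (with the hermitian inner
product `B` for which the monomials are orthogonal and `⟨zⁿ,zⁿ⟩ = n!(2h)(2h+1)⋯(2h+n−1)`),
the operators `D` and `F` are mutually adjoint: `⟨D p, q⟩ = ⟨p, F q⟩`, and bounded with
constant `C = max(1, (2h)^{−1/2})`. -/
theorem stmt_3 (h : ℝ) (hpos : 0 < h)
    (F : E) (hF : ∀ n : ℕ, F (X ^ n) = (((n : ℂ) + 2 * h)⁻¹) • X ^ (n + 1))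
    (B : Polynomial ℂ → Polynomial ℂ → ℂ)
    (hB_addl : ∀ p q r : Polynomial ℂ, B (p + q) r = B p r + B q r)
    (hB_smull : ∀ (a : ℂ) (p q : Polynomial ℂ), B (a • p) q = a * B p q)
    (hB_addr : ∀ p q r : Polynomial ℂ, B p (q + r) = B p q + B p r)
    (hB_smulr : ∀ (a : ℂ) (p q : Polynomial ℂ), B p (a • q) = (starRingEnd ℂ) a * B p q)
    (hB_orth : ∀ m n : ℕ, m ≠ n → B (X ^ m) (X ^ n) = 0)
    (hB_diag : ∀ n : ℕ, B (X ^ n) (X ^ n) = ((w h n : ℝ) : ℂ)) :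
    (∀ p q : Polynomial ℂ, B (Dop p) q = B p (F q)) ∧
    (∃ C : ℝ, 0 < C ∧ C = max 1 (Real.sqrt (2 * h))⁻¹ ∧
      ∀ p : Polynomial ℂ,
        Real.sqrt (B (Dop p) (Dop p)).re ≤ C * Real.sqrt (B p p).re ∧
        Real.sqrt (B (F p) (F p)).re ≤ C * Real.sqrt (B p p).re) := by
  let B' := LinearMap.mk₂'ₛₗ (RingHom.id ℂ) (starRingEnd ℂ) B hB_addl hB_smull hB_addr hB_smulr
  have hnd : ∀ n : ℕ, (n : ℝ) + 2 * h ≠ 0 := fun n => by positivity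
  refine ⟨sesq_apply_derivative_eq_apply_F (B := B') hB_orth hB_diag hF hnd,
    _, zero_lt_one.trans_le (le_max_left _ _), rfl, fun p => ⟨?_, ?_⟩⟩
  · exact Real.sqrt_le_max_one_inv_sqrt_mul
      (sesq_apply_derivative_self_re_le (B := B') hB_orth hB_diag hpos p)
  · exact Real.sqrt_le_max_one_inv_sqrt_mul
      (sesq_apply_F_self_re_le (B := B') hB_orth hB_diag hF hpos p)

end
end

section
/- Let h be a real number with h ≠ −k/2 for every integer k ≥ 0. Then the q_R-conformal symmetries L_n form a family of tensor operators for 𝔰𝔩(2,ℂ): [l_i, L_n] = (i − n)·L_{i+n} on ℂ[z] for every i ∈ {−1, 0, 1} and every n ∈ ℤ. -/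
open Polynomial

noncomputable section

/-!
For `n ≥ 0` the operator `L_n = z D^{n+1} + (n+1) h D^n` lies in the Weyl algebra, and the
single relation `[D, z] = 1` gives `[L_a, L_b] = (a - b) L_{a+b}` for all `a, b ≥ 0`; this
contains the cases `i = 0, 1` because `l₀ = L₀` and `l₁ = L₁`, and
`[z, L_{k+1}] = -(k+2) L_k` follows in the same way.
For `n = -k ≤ 0` the operator `L_n` sends `zʲ` to `(j + (k+1)h) / (j+2h)_k · z^{j+k}`, with
`(x)_k` the rising Pochhammer symbol, so on monomials each relation becomes a rational identity
between these coefficients; the Pochhammer relations `(x)_{k+1} = (x)_k (x+k) = x (x+1)_k` prove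
it, and nondegeneracy of `h` is exactly what makes the denominators nonzero.
At `k = 0` that formula gives back `L₀`, which glues the two halves together.
-/

lemma linearMap_ext_X_pow {R M : Type*} [CommSemiring R] [AddCommMonoid M] [Module R M]
    {f g : R[X] →ₗ[R] M} (hfg : ∀ n : ℕ, f (X ^ n) = g (X ^ n)) : f = g :=
  (basisMonomials R).ext fun n => by
    simpa [coe_basisMonomials, ← monomial_one_right_eq_X_pow] using hfg n

lemma ascPochhammer_eval_eq_prod_range {S : Type*} [CommSemiring S] (k : ℕ) (x : S) :
    (ascPochhammer S k).eval x = ∏ i ∈ Finset.range k, (x + i) := by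
  induction k with
  | zero => simp
  | succ k ih => rw [ascPochhammer_succ_eval, ih, Finset.prod_range_succ]

lemma ascPochhammer_succ_eval_left {S : Type*} [CommSemiring S] (k : ℕ) (x : S) :
    (ascPochhammer S (k + 1)).eval x = x * (ascPochhammer S k).eval (x + 1) := by
  simp [ascPochhammer_succ_left]

lemma ascPochhammer_eval_ne_zero {R : Type*} [CommRing R] [IsDomain R] {x : R}
    (hx : ∀ m : ℕ, x + m ≠ 0) (k : ℕ) : (ascPochhammer R k).eval x ≠ 0 := by
  rw [ne_eq, ascPochhammer_eval_eq_zero_iff]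
  rintro ⟨i, -, hi⟩
  exact hx i (by rw [hi]; ring)

lemma Mz_X_pow (j : ℕ) : Mz (X ^ j) = X ^ (j + 1) := by
  rw [pow_succ']
  rfl

lemma Dop_mul_Mz : Dop * Mz = Mz * Dop + 1 :=
  LinearMap.ext fun p => by simp [Dop, Mz, add_comm]

lemma Dop_pow_succ_mul_Mz (m : ℕ) :
    Dop ^ (m + 1) * Mz = Mz * Dop ^ (m + 1) + ((m : ℂ) + 1) • Dop ^ m := by
  induction m with
  | zero => simpa using Dop_mul_Mz
  | succ m ih =>
    rw [pow_succ' Dop (m + 1), mul_assoc, ih, mul_add, ← mul_assoc, Dop_mul_Mz, mul_smul_comm,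
      ← pow_succ', add_mul, one_mul, mul_assoc, ← pow_succ']
    push_cast
    module

lemma Dop_pow_mul_Mz_mul_Dop_pow_succ (a b : ℕ) :
    Dop ^ a * (Mz * Dop ^ (b + 1)) = Mz * Dop ^ (a + b + 1) + (a : ℂ) • Dop ^ (a + b) := by
  rcases a with _ | a
  · simp
  · rw [← mul_assoc, Dop_pow_succ_mul_Mz, add_mul, mul_assoc, smul_mul_assoc, ← pow_add,
      ← pow_add, ← add_assoc, ← add_assoc, Nat.add_right_comm a b 1, Nat.cast_succ]

lemma opComm_apply_X_pow {A B : E} {a b : ℕ → ℂ} {d e : ℕ}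
    (hA : ∀ j, A (X ^ j) = a j • X ^ (j + d)) (hB : ∀ j, B (X ^ j) = b j • X ^ (j + e))
    (j : ℕ) : opComm A B (X ^ j) = (a (j + e) * b j - b (j + d) * a j) • X ^ (j + d + e) := by
  simp only [opComm, LinearMap.sub_apply, Module.End.mul_apply, hA, hB, map_smul, smul_smul,
    Nat.add_right_comm j e d, sub_smul, mul_comm (b j), mul_comm (a j)]

section Modes

variable (h : ℂ)

-- In the paper's notation `confSymPos h k = L_k` and `confSymNeg h k = L_{-k}` for `k ≥ 0`,
-- and `confSym h n = L_n` for `n ∈ ℤ`.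
def confSymPos (k : ℕ) : E := Mz * Dop ^ (k + 1) + (((k : ℂ) + 1) * h) • Dop ^ k

def negCoeff (k j : ℕ) : ℂ :=
  ((j : ℂ) + ((k : ℂ) + 1) * h) / (ascPochhammer ℂ k).eval ((j : ℂ) + 2 * h)

def confSymNeg (k : ℕ) : E :=
  (basisMonomials ℂ).constr ℂ fun j => negCoeff h k j • X ^ (j + k)

def confSym (n : ℤ) : E :=
  if 0 ≤ n then confSymPos h n.toNat else confSymNeg h (-n).toNat

lemma opComm_confSymPos (a b : ℕ) :
    opComm (confSymPos h a) (confSymPos h b) = ((a : ℂ) - b) • confSymPos h (a + b) := by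
  simp only [opComm, confSymPos, mul_add, add_mul, mul_assoc, smul_mul_assoc, mul_smul_comm,
    Dop_pow_mul_Mz_mul_Dop_pow_succ, ← pow_add]
  rw [show b + 1 + a = a + b + 1 by omega, Nat.add_right_comm a 1 b, add_comm b a]
  push_cast
  module

lemma opComm_Mz_confSymPos_succ (k : ℕ) :
    opComm Mz (confSymPos h (k + 1)) = (-((k : ℂ) + 2)) • confSymPos h k := by
  simp only [opComm, confSymPos, mul_add, add_mul, mul_assoc, smul_mul_assoc, mul_smul_comm,
    Dop_pow_succ_mul_Mz]
  push_cast
  module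

lemma confSymPos_zero_X_pow (j : ℕ) : confSymPos h 0 (X ^ j) = ((j : ℂ) + h) • X ^ j := by
  rcases j with _ | j
  · simp [confSymPos, Dop]
  · simp [confSymPos, Dop, Mz, smul_eq_C_mul]
    ring

lemma confSymPos_one_one : confSymPos h 1 1 = 0 := by
  simp [confSymPos, Dop, sq]

lemma confSymPos_one_X_pow_succ (j : ℕ) :
    confSymPos h 1 (X ^ (j + 1)) = (((j : ℂ) + 1) * (j + 2 * h)) • X ^ j := by
  rcases j with _ | j
  · norm_num [confSymPos, Dop, Mz, smul_eq_C_mul, sq]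
  · simp [confSymPos, Dop, Mz, smul_eq_C_mul, sq, map_ofNat]
    ring

lemma confSymNeg_X_pow (k j : ℕ) : confSymNeg h k (X ^ j) = negCoeff h k j • X ^ (j + k) := by
  have :=
    (basisMonomials ℂ).constr_basis ℂ (fun j => negCoeff h k j • (X : ℂ[X]) ^ (j + k)) j
  simp only [coe_basisMonomials, monomial_one_right_eq_X_pow] at this
  exact this

lemma confSymNeg_zero : confSymNeg h 0 = confSymPos h 0 :=
  linearMap_ext_X_pow fun j => by simp [confSymNeg_X_pow, confSymPos_zero_X_pow, negCoeff]

lemma confSym_natCast (k : ℕ) : confSym h k = confSymPos h k := by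
  simp [confSym]

lemma confSym_neg_natCast (k : ℕ) : confSym h (-k) = confSymNeg h k := by
  rcases k with _ | k
  · simp [confSym, confSymNeg_zero]
  · simp [confSym]
    omega

lemma opComm_confSymPos_zero_confSymNeg (k : ℕ) :
    opComm (confSymPos h 0) (confSymNeg h k) = (k : ℂ) • confSymNeg h k :=
  linearMap_ext_X_pow fun j => by
    rw [opComm_apply_X_pow (d := 0) (fun j => by rw [add_zero, confSymPos_zero_X_pow])
      (confSymNeg_X_pow h k) j, LinearMap.smul_apply, confSymNeg_X_pow, smul_smul, add_zero]
    push_cast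
    module

lemma opComm_confSymPos_zero_confSym (n : ℤ) :
    opComm (confSymPos h 0) (confSym h n) = ((-n : ℤ) : ℂ) • confSym h n := by
  rcases le_or_gt 0 n with hn | hn
  · obtain ⟨k, rfl⟩ : ∃ k : ℕ, n = k := ⟨n.toNat, by omega⟩
    rw [confSym_natCast, opComm_confSymPos, zero_add]
    push_cast
    module
  · obtain ⟨k, rfl⟩ : ∃ k : ℕ, n = -k := ⟨(-n).toNat, by omega⟩
    rw [confSym_neg_natCast, opComm_confSymPos_zero_confSymNeg, neg_neg]
    push_cast
    rfl

end Modes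

section Nondegenerate

variable {h : ℂ} (h2 : ∀ m : ℕ, 2 * h + m ≠ 0)
include h2

lemma natCast_add_two_mul_add_ne_zero (j m : ℕ) : (j : ℂ) + 2 * h + m ≠ 0 := by
  convert h2 (j + m) using 1
  push_cast
  ring

lemma negCoeff_sub_negCoeff_succ (k j : ℕ) :
    negCoeff h k j - negCoeff h k (j + 1) = ((k : ℂ) - 1) * negCoeff h (k + 1) j := by
  have hx := natCast_add_two_mul_add_ne_zero h2 j
  have hA := ascPochhammer_eval_ne_zero hx k
  have hB := ascPochhammer_eval_ne_zero (x := (j : ℂ) + 2 * h + 1)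
    (fun m => by simpa [add_assoc] using hx (1 + m)) k
  have rel := (ascPochhammer_succ_eval_left k ((j : ℂ) + 2 * h)).symm.trans
    (ascPochhammer_succ_eval k _)
  simp only [negCoeff, ascPochhammer_succ_eval]
  rw [show ((j + 1 : ℕ) : ℂ) + 2 * h = j + 2 * h + 1 by push_cast; ring]
  generalize (ascPochhammer ℂ k).eval ((j : ℂ) + 2 * h) = A at *
  generalize (ascPochhammer ℂ k).eval ((j : ℂ) + 2 * h + 1) = B at *
  rw [div_sub_div _ _ hA hB, mul_div_assoc',
    div_eq_div_iff (mul_ne_zero hA hB) (mul_ne_zero hA (hx k))]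
  push_cast
  linear_combination A * ((j : ℂ) + 1 + (k + 1) * h) * rel

lemma negCoeff_succ_zero_mul (m : ℕ) :
    negCoeff h (m + 1) 0 * (((m : ℂ) + 1) * (m + 2 * h)) = ((m : ℂ) + 2) * negCoeff h m 0 := by
  have hA := ascPochhammer_eval_ne_zero (x := 2 * h) h2 m
  simp only [negCoeff, ascPochhammer_succ_eval, Nat.cast_zero, zero_add]
  generalize (ascPochhammer ℂ m).eval (2 * h) = A at *
  push_cast
  rw [div_mul_eq_mul_div, mul_div_assoc', div_eq_div_iff (mul_ne_zero hA (h2 m)) hA]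
  ring

lemma negCoeff_succ_succ_mul_sub (m j : ℕ) :
    negCoeff h (m + 1) (j + 1) * (((j : ℂ) + m + 2) * (j + m + 1 + 2 * h))
      - ((j : ℂ) + 1) * (j + 2 * h) * negCoeff h (m + 1) j
      = ((m : ℂ) + 2) * negCoeff h m (j + 1) := by
  have hx := natCast_add_two_mul_add_ne_zero h2 j
  have hx0 : (j : ℂ) + 2 * h ≠ 0 := by simpa using hx 0
  have hxm : (j : ℂ) + m + 1 + 2 * h ≠ 0 := by convert hx (m + 1) using 1; push_cast; ring
  have hR := ascPochhammer_eval_ne_zero (x := (j + 1 : ℕ) + 2 * h)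
    (natCast_add_two_mul_add_ne_zero h2 (j + 1)) m
  simp only [negCoeff]
  rw [ascPochhammer_succ_eval m (((j + 1 : ℕ) : ℂ) + 2 * h),
    ascPochhammer_succ_eval_left m ((j : ℂ) + 2 * h),
    show (j : ℂ) + 2 * h + 1 = (j + 1 : ℕ) + 2 * h by push_cast; ring]
  generalize (ascPochhammer ℂ m).eval (((j + 1 : ℕ) : ℂ) + 2 * h) = R at *
  push_cast at *
  rw [show (j : ℂ) + 1 + 2 * h + m = j + m + 1 + 2 * h by ring, div_mul_eq_mul_div,
    ← mul_assoc, mul_div_mul_right _ _ hxm, mul_div_assoc', mul_comm (_ + 2 * h) R,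
    mul_right_comm _ ((j : ℂ) + 2 * h), mul_div_mul_right _ _ hx0, ← sub_div, mul_div_assoc']
  ring

lemma opComm_Mz_confSymNeg (k : ℕ) :
    opComm Mz (confSymNeg h k) = ((k : ℂ) - 1) • confSymNeg h (k + 1) :=
  linearMap_ext_X_pow fun j => by
    rw [opComm_apply_X_pow (a := fun _ => 1) (d := 1) (fun j => by rw [one_smul, Mz_X_pow])
      (confSymNeg_X_pow h k) j, LinearMap.smul_apply, confSymNeg_X_pow, smul_smul, one_mul,
      mul_one, negCoeff_sub_negCoeff_succ h2, add_right_comm j 1 k, add_assoc]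

lemma opComm_confSymPos_one_confSymNeg_succ (m : ℕ) :
    opComm (confSymPos h 1) (confSymNeg h (m + 1)) = ((m : ℂ) + 2) • confSymNeg h m :=
  linearMap_ext_X_pow fun j => by
    simp only [opComm, LinearMap.sub_apply, Module.End.mul_apply, LinearMap.smul_apply,
      confSymNeg_X_pow, map_smul, smul_smul, ← add_assoc, confSymPos_one_X_pow_succ]
    rcases j with _ | j
    · rw [pow_zero, confSymPos_one_one, map_zero, sub_zero, ← negCoeff_succ_zero_mul h2]
      push_cast
      module
    · rw [confSymPos_one_X_pow_succ, map_smul, confSymNeg_X_pow, smul_smul, ← add_assoc,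
        add_right_comm j m 1, ← sub_smul, ← negCoeff_succ_succ_mul_sub h2]
      push_cast
      module

lemma opComm_Mz_confSym (n : ℤ) :
    opComm Mz (confSym h n) = ((-1 - n : ℤ) : ℂ) • confSym h (-1 + n) := by
  rcases le_or_gt n 0 with hn | hn
  · obtain ⟨k, rfl⟩ : ∃ k : ℕ, n = -k := ⟨(-n).toNat, by omega⟩
    rw [show -1 + -(k : ℤ) = -((k + 1 : ℕ) : ℤ) by push_cast; ring, confSym_neg_natCast,
      confSym_neg_natCast, opComm_Mz_confSymNeg h2]
    push_cast
    module
  · obtain ⟨k, rfl⟩ : ∃ k : ℕ, n = (k + 1 : ℕ) := ⟨(n - 1).toNat, by omega⟩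
    rw [show -1 + ((k + 1 : ℕ) : ℤ) = k by push_cast; ring, confSym_natCast, confSym_natCast,
      opComm_Mz_confSymPos_succ]
    push_cast
    module

lemma opComm_confSymPos_one_confSym (n : ℤ) :
    opComm (confSymPos h 1) (confSym h n) = ((1 - n : ℤ) : ℂ) • confSym h (1 + n) := by
  rcases le_or_gt 0 n with hn | hn
  · obtain ⟨k, rfl⟩ : ∃ k : ℕ, n = k := ⟨n.toNat, by omega⟩
    rw [show 1 + (k : ℤ) = (1 + k : ℕ) by push_cast; ring, confSym_natCast, confSym_natCast,
      opComm_confSymPos]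
    push_cast
    module
  · obtain ⟨k, rfl⟩ : ∃ k : ℕ, n = -(k + 1 : ℕ) := ⟨(-n - 1).toNat, by omega⟩
    rw [show 1 + -((k + 1 : ℕ) : ℤ) = -(k : ℤ) by push_cast; ring, confSym_neg_natCast,
      confSym_neg_natCast, opComm_confSymPos_one_confSymNeg_succ h2]
    push_cast
    module

end Nondegenerate

/-- For nondegenerate extremal weight `h`, the q_R-conformal symmetries `Lₙ`
form a family of tensor operators for 𝔰𝔩(2,ℂ): `[lᵢ, Lₙ] = (i − n)·L_{i+n}` for
`i ∈ {−1,0,1}` and all `n ∈ ℤ`. -/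
theorem stmt_5 (h : ℝ) (hh : ∀ k : ℕ, h ≠ -(k : ℝ) / 2)
    (L : ℤ → E)
    (hLpos : ∀ k : ℕ, L (k : ℤ) = Mz * Dop ^ (k + 1) + (((k : ℂ) + 1) * (h : ℂ)) • Dop ^ k)
    (hLneg : ∀ k : ℕ, 1 ≤ k → ∀ n : ℕ,
      L (-(k : ℤ)) (X ^ n) =
        (((n : ℂ) + ((k : ℂ) + 1) * (h : ℂ)) /
            ∏ i ∈ Finset.range k, ((n : ℂ) + 2 * h + (i : ℂ))) • X ^ (n + k))
    :
    ∀ n : ℤ,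
      opComm lm1 (L n) = ((-1 - n : ℤ) : ℂ) • L (-1 + n) ∧
      opComm (l0 h) (L n) = ((-n : ℤ) : ℂ) • L n ∧
      opComm (l1 h) (L n) = ((1 - n : ℤ) : ℂ) • L (1 + n) := by
  have h2 : ∀ m : ℕ, 2 * (h : ℂ) + m ≠ 0 := fun m hm => hh m <| by
    have : ((2 * h + m : ℝ) : ℂ) = 0 := by push_cast; exact hm
    rw [Complex.ofReal_eq_zero] at this
    linarith
  have hL : L = confSym h := funext fun n => by
    rcases le_or_gt 0 n with hn | hn
    · obtain ⟨k, rfl⟩ : ∃ k : ℕ, n = k := ⟨n.toNat, by omega⟩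
      rw [hLpos, confSym_natCast, confSymPos]
    · obtain ⟨k, rfl⟩ : ∃ k : ℕ, n = -k := ⟨(-n).toNat, by omega⟩
      refine (confSym_neg_natCast _ k).symm ▸ linearMap_ext_X_pow fun j => ?_
      rw [hLneg k (by omega) j, confSymNeg_X_pow, negCoeff, ascPochhammer_eval_eq_prod_range]
  have hl0 : l0 h = confSymPos h 0 := by simp [l0, confSymPos]
  have hl1 : l1 h = confSymPos h 1 := by norm_num [l1, confSymPos, sq]
  subst hL
  rw [hl0, hl1]
  exact fun n => ⟨opComm_Mz_confSym h2 n, opComm_confSymPos_zero_confSym h n,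
    opComm_confSymPos_one_confSym h2 n⟩

end
end

section
/- Let h > 0. Then on the unitarizable Verma module the q_R-conformal symmetries satisfy the adjointness relation L_n* = L₋ₙ: for every n ∈ ℤ and all p, q ∈ ℂ[z], ⟨L_n p, q⟩ = ⟨p, L₋ₙ q⟩. -/
/-!
On monomials, `L_k` for `k ≥ 0` is the weighted shift `z^(n+k) ↦ (n+k)!/n! · (n + (k+1)h) · zⁿ`
and `L_{-k}` is `zⁿ ↦ (n + (k+1)h)/((n+2h)⋯(n+2h+k-1)) · z^(n+k)`. Since the monomials are
orthogonal with real squared norms `w n`, adjointness reduces to the identity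
`w (n+k) = (n+k)!/n! · w n · (n+2h)⋯(n+2h+k-1)`, where `h > 0` keeps the denominators nonzero.
The form is hermitian, so the case of a negative index follows from the positive one by conjugation.
-/

open Polynomial

noncomputable section

open ComplexConjugate

structure IsSesquilinear (B : ℂ[X] → ℂ[X] → ℂ) : Prop where
  add_left : ∀ p q r, B (p + q) r = B p r + B q r
  smul_left : ∀ (a : ℂ) p q, B (a • p) q = a * B p q
  add_right : ∀ p q r, B p (q + r) = B p q + B p r
  smul_right : ∀ (a : ℂ) p q, B p (a • q) = conj a * B p q

namespace IsSesquilinear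

variable {B : ℂ[X] → ℂ[X] → ℂ}

theorem apply_eq_apply_of_monomials (hB : IsSesquilinear B) {T S : E}
    (h : ∀ m n : ℕ, B (T (X ^ m)) (X ^ n) = B (X ^ m) (S (X ^ n))) (p q : ℂ[X]) :
    B (T p) q = B p (S q) := by
  induction p using Polynomial.induction_on' with
  | add p₁ p₂ h₁ h₂ => rw [map_add, hB.add_left, hB.add_left, h₁, h₂]
  | monomial m a =>
    induction q using Polynomial.induction_on' with
    | add q₁ q₂ h₁ h₂ => rw [map_add, hB.add_right, hB.add_right, h₁, h₂]
    | monomial n b =>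
      rw [← smul_X_eq_monomial, ← smul_X_eq_monomial, map_smul, map_smul, hB.smul_left,
        hB.smul_left, hB.smul_right, hB.smul_right, h]

theorem eq_conj_of_monomials (hB : IsSesquilinear B)
    (h : ∀ m n : ℕ, B (X ^ m) (X ^ n) = conj (B (X ^ n) (X ^ m))) (p q : ℂ[X]) :
    B p q = conj (B q p) := by
  induction p using Polynomial.induction_on' with
  | add p₁ p₂ h₁ h₂ => rw [hB.add_left, hB.add_right, map_add, h₁, h₂]
  | monomial m a =>
    induction q using Polynomial.induction_on' with
    | add q₁ q₂ h₁ h₂ => rw [hB.add_left, hB.add_right, map_add, h₁, h₂]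
    | monomial n b =>
      rw [← smul_X_eq_monomial, ← smul_X_eq_monomial, hB.smul_left, hB.smul_right,
        hB.smul_left, hB.smul_right, h, map_mul, map_mul, Complex.conj_conj]
      ring

theorem eq_conj_of_orthogonal (hB : IsSesquilinear B) {μ : ℕ → ℝ}
    (horth : ∀ m n : ℕ, m ≠ n → B (X ^ m) (X ^ n) = 0)
    (hdiag : ∀ n : ℕ, B (X ^ n) (X ^ n) = μ n) (p q : ℂ[X]) :
    B p q = conj (B q p) := by
  refine hB.eq_conj_of_monomials (fun m n => ?_) p q
  rcases eq_or_ne m n with rfl | hmn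
  · rw [hdiag, Complex.conj_ofReal]
  · rw [horth m n hmn, horth n m hmn.symm, map_zero]

theorem apply_eq_apply_of_weightedShift (hB : IsSesquilinear B) {μ : ℕ → ℝ}
    (horth : ∀ m n : ℕ, m ≠ n → B (X ^ m) (X ^ n) = 0)
    (hdiag : ∀ n : ℕ, B (X ^ n) (X ^ n) = μ n) {T S : E} {k : ℕ} {a b : ℕ → ℝ}
    (hT : ∀ n, T (X ^ (n + k)) = (a n : ℂ) • X ^ n) (hT_lt : ∀ m < k, T (X ^ m) = 0)
    (hS : ∀ n, S (X ^ n) = (b n : ℂ) • X ^ (n + k)) (hab : ∀ n, a n * μ n = b n * μ (n + k))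
    (p q : ℂ[X]) : B (T p) q = B p (S q) := by
  refine hB.apply_eq_apply_of_monomials (fun m n => ?_) p q
  rw [hS, hB.smul_right, Complex.conj_ofReal]
  obtain hm | ⟨i, rfl⟩ : m < k ∨ ∃ i, m = i + k :=
    (lt_or_ge m k).imp_right fun hm => ⟨m - k, by omega⟩
  · rw [hT_lt m hm, ← zero_smul ℂ (1 : ℂ[X]), hB.smul_left, horth m (n + k) (by omega)]
    simp
  · rw [hT, hB.smul_left]
    rcases eq_or_ne i n with rfl | hin
    · rw [hdiag, hdiag]
      exact_mod_cast hab i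
    · rw [horth i n hin, horth _ _ (by omega)]
      simp

end IsSesquilinear

def conformalLowering (h : ℝ) (k : ℕ) : E :=
  Mz * Dop ^ (k + 1) + (((k : ℂ) + 1) * (h : ℂ)) • Dop ^ k

theorem Dop_pow_apply_X_pow (k m : ℕ) :
    (Dop ^ k) (X ^ m : ℂ[X]) = (m.descFactorial k : ℂ) • X ^ (m - k) := by
  rw [Module.End.pow_apply]
  exact iterate_derivative_X_pow_eq_smul m k

theorem Mz_mul_Dop_apply_X_pow (n : ℕ) : (Mz * Dop) (X ^ n : ℂ[X]) = (n : ℂ) • X ^ n := by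
  cases n with
  | zero => simp [Mz, Dop]
  | succ n =>
    simp only [Module.End.mul_apply, Mz, Dop, LinearMap.mulLeft_apply, derivative_X_pow,
      Nat.add_sub_cancel, smul_eq_C_mul, C_eq_natCast]
    ring

theorem conformalLowering_apply_X_pow_add (h : ℝ) (k n : ℕ) :
    conformalLowering h k (X ^ (n + k)) =
      ((((n + k).descFactorial k : ℝ) * (n + (k + 1) * h) : ℝ) : ℂ) • X ^ n := by
  rw [conformalLowering, pow_succ', ← mul_assoc, LinearMap.add_apply, LinearMap.smul_apply,
    Module.End.mul_apply, Dop_pow_apply_X_pow, Nat.add_sub_cancel, map_smul,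
    Mz_mul_Dop_apply_X_pow, smul_smul, smul_smul, ← add_smul]
  push_cast
  ring_nf

theorem conformalLowering_apply_X_pow_of_lt (h : ℝ) {k m : ℕ} (hm : m < k) :
    conformalLowering h k (X ^ m) = 0 := by
  rw [conformalLowering, pow_succ', ← mul_assoc, LinearMap.add_apply, LinearMap.smul_apply,
    Module.End.mul_apply, Dop_pow_apply_X_pow, Nat.descFactorial_eq_zero_iff_lt.mpr hm]
  simp

theorem w_add (h : ℝ) (n k : ℕ) :
    w h (n + k) = (n + k).descFactorial k * w h n * ∏ i ∈ Finset.range k, (n + 2 * h + i) := by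
  have hfact : ((n + k).factorial : ℝ) = n.factorial * (n + k).descFactorial k := by
    rw [← Nat.factorial_mul_descFactorial (Nat.le_add_left k n), Nat.add_sub_cancel]
    push_cast; rfl
  simp only [w, hfact, Finset.prod_range_add, Nat.cast_add]
  simp only [← add_assoc, add_comm (2 * h) (n : ℝ)]
  ring

theorem descFactorial_mul_w (h : ℝ) (hpos : 0 < h) (n k : ℕ) :
    (n + k).descFactorial k * (n + (k + 1) * h) * w h n =
      (n + (k + 1) * h) / (∏ i ∈ Finset.range k, (n + 2 * h + i)) * w h (n + k) := by
  have hprod : ∏ i ∈ Finset.range k, ((n : ℝ) + 2 * h + i) ≠ 0 :=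
    Finset.prod_ne_zero_iff.mpr fun i _ => by positivity
  rw [w_add, div_mul_eq_mul_div, eq_div_iff hprod]
  ring

/-- For `h > 0`, on the unitarizable Verma module the q_R-conformal symmetries
satisfy `Lₙ* = L₋ₙ`: `⟨Lₙ p, q⟩ = ⟨p, L₋ₙ q⟩` for all `n ∈ ℤ` and all `p, q ∈ ℂ[z]`. -/
theorem stmt_8 (h : ℝ) (hpos : 0 < h)
    (L : ℤ → E)
    (hLpos : ∀ k : ℕ, L (k : ℤ) = Mz * Dop ^ (k + 1) + (((k : ℂ) + 1) * (h : ℂ)) • Dop ^ k)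
    (hLneg : ∀ k : ℕ, 1 ≤ k → ∀ n : ℕ,
      L (-(k : ℤ)) (X ^ n) =
        (((n : ℂ) + ((k : ℂ) + 1) * (h : ℂ)) /
            ∏ i ∈ Finset.range k, ((n : ℂ) + 2 * h + (i : ℂ))) • X ^ (n + k))
    (B : Polynomial ℂ → Polynomial ℂ → ℂ)
    (hB_addl : ∀ p q r : Polynomial ℂ, B (p + q) r = B p r + B q r)
    (hB_smull : ∀ (a : ℂ) (p q : Polynomial ℂ), B (a • p) q = a * B p q)
    (hB_addr : ∀ p q r : Polynomial ℂ, B p (q + r) = B p q + B p r)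
    (hB_smulr : ∀ (a : ℂ) (p q : Polynomial ℂ), B p (a • q) = (starRingEnd ℂ) a * B p q)
    (hB_orth : ∀ m n : ℕ, m ≠ n → B (X ^ m) (X ^ n) = 0)
    (hB_diag : ∀ n : ℕ, B (X ^ n) (X ^ n) = ((w h n : ℝ) : ℂ))
    :
    ∀ n : ℤ, ∀ p q : Polynomial ℂ, B (L n p) q = B p (L (-n) q) := by
  have hB : IsSesquilinear B := ⟨hB_addl, hB_smull, hB_addr, hB_smulr⟩
  have hL : ∀ k : ℕ, L k = conformalLowering h k := hLpos
  have hL_neg (k n : ℕ) : L (-k) (X ^ n) =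
      ((((n : ℝ) + (k + 1) * h) / ∏ i ∈ Finset.range k, ((n : ℝ) + 2 * h + i) : ℝ) : ℂ) •
        X ^ (n + k) := by
    rcases k.eq_zero_or_pos with rfl | hk
    · have hL₀ : L 0 = conformalLowering h 0 := hL 0
      simpa [hL₀] using conformalLowering_apply_X_pow_add h 0 n
    · rw [hLneg k hk]
      push_cast
      rfl
  have hadj (k : ℕ) (p q : ℂ[X]) : B (L k p) q = B p (L (-k) q) :=
    hB.apply_eq_apply_of_weightedShift hB_orth hB_diag
      (fun n => hL k ▸ conformalLowering_apply_X_pow_add h k n)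
      (fun m hm => hL k ▸ conformalLowering_apply_X_pow_of_lt h hm)
      (hL_neg k) (descFactorial_mul_w h hpos · k) p q
  intro n p q
  obtain ⟨k, rfl | rfl⟩ := Int.eq_nat_or_neg n
  · exact hadj k p q
  · rw [neg_neg, hB.eq_conj_of_orthogonal hB_orth hB_diag, ← hadj,
      ← hB.eq_conj_of_orthogonal hB_orth hB_diag]

end
end
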